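/- arXiv:2009.12367 — 2 statements merged into one kernel-verified Lean document; each statement's English description precedes it below -/
import Mathlib

section
/- Decoupled eigendynamics: Suppose ẋ(t) = A x(t) + B u(t) + D x(t)M + E u(t)M with M symmetric, M v^ℓ = λ^ℓ v^ℓ, ‖v^ℓ‖ = 1. Then the eigenstate x^ℓ(t) := x(t) v^ℓ (v^ℓ)ᵀ satisfies ẋ^ℓ(t) = (A + λ^ℓ D) x^ℓ(t) + (B + λ^ℓ E) u^ℓ(t) where u^ℓ(t) := u(t) v^ℓ (v^ℓ)ᵀ. -/
open Matrix

attribute [local instance] Matrix.frobeniusNormedAddCommGroup Matrix.frobeniusNormedSpace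

/-- decoupled eigendynamics: if `ẋ(t) = A x(t) + B u(t) + D x(t) M + E u(t) M`
with `M` symmetric, `M vˡ = λˡ vˡ`, `‖vˡ‖ = 1`, then `xˡ(t) := x(t) vˡ (vˡ)ᵀ` satisfies
`ẋˡ(t) = (A + λˡ D) xˡ(t) + (B + λˡ E) uˡ(t)` where `uˡ(t) := u(t) vˡ (vˡ)ᵀ`. -/
theorem stmt10 {n dx du : ℕ}
    (A D : Matrix (Fin dx) (Fin dx) ℝ) (B E : Matrix (Fin dx) (Fin du) ℝ)
    (M : Matrix (Fin n) (Fin n) ℝ) (hSymm : M.IsSymm)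
    (lam : ℝ) (v : Fin n → ℝ) (hv : M.mulVec v = lam • v)
    (hvnorm : dotProduct v v = 1)
    (x : ℝ → Matrix (Fin dx) (Fin n) ℝ) (u : ℝ → Matrix (Fin du) (Fin n) ℝ)
    (hdyn : ∀ t : ℝ,
      HasDerivAt x (A * x t + B * u t + D * (x t * M) + E * (u t * M)) t) :
    ∀ t : ℝ,
      HasDerivAt (fun s => x s * Matrix.vecMulVec v v)
        ((A + lam • D) * (x t * Matrix.vecMulVec v v)
          + (B + lam • E) * (u t * Matrix.vecMulVec v v)) t := by
  intro t
  set P := Matrix.vecMulVec v v with hP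
  have hMP : M * P = lam • P := by
    ext i j
    have hi := congrFun hv i
    simp only [Matrix.mulVec, dotProduct, Pi.smul_apply, smul_eq_mul] at hi
    simp only [hP, Matrix.mul_apply, Matrix.vecMulVec_apply, Matrix.smul_apply, smul_eq_mul]
    calc ∑ k, M i k * (v k * v j) = (∑ k, M i k * v k) * v j := by
          rw [Finset.sum_mul]; congr 1; ext k; ring
      _ = lam * (v i * v j) := by rw [hi]; ring
  let L : Matrix (Fin dx) (Fin n) ℝ →ₗ[ℝ] Matrix (Fin dx) (Fin n) ℝ :=
    { toFun := fun Y => Y * P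
      map_add' := fun a b => Matrix.add_mul a b P
      map_smul' := fun c a => Matrix.smul_mul c a P }
  have hL := (LinearMap.toContinuousLinearMap L).hasFDerivAt (x := x t)
  have h := hL.comp_hasDerivAt t (hdyn t)
  have hLsimp : ∀ Y, LinearMap.toContinuousLinearMap L Y = Y * P := fun Y => rfl
  change HasDerivAt (fun s => x s * P) ((A * x t + B * u t + D * (x t * M) + E * (u t * M)) * P) t at h
  convert h using 1
  rw [Matrix.add_mul A, Matrix.add_mul B, Matrix.smul_mul, Matrix.smul_mul,
    Matrix.add_mul _ _ P, Matrix.add_mul _ _ P, Matrix.add_mul _ _ P,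
    Matrix.mul_assoc A, Matrix.mul_assoc B, Matrix.mul_assoc D, Matrix.mul_assoc E,
    Matrix.mul_assoc (x t), Matrix.mul_assoc (u t), hMP, Matrix.mul_smul, Matrix.mul_smul,
    Matrix.mul_smul, Matrix.mul_smul]
  abel
end

section
/- Decoupled auxiliary dynamics: Under the dynamics ẋ(t) = A x(t) + B u(t) + D x(t)M + E u(t)M with M = Σ_{ℓ=1}^L λ^ℓ v^ℓ (v^ℓ)ᵀ (spectral decomposition over nonzero eigenvalues), the auxiliary processes x̆(t) := x(t) − Σ_ℓ x(t)v^ℓ(v^ℓ)ᵀ and ŭ(t) := u(t) − Σ_ℓ u(t)v^ℓ(v^ℓ)ᵀ satisfy ẋ̆(t) = A x̆(t) + B ŭ(t). -/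
open Matrix

attribute [local instance] Matrix.frobeniusNormedAddCommGroup Matrix.frobeniusNormedSpace

lemma vecMulVec_mul' {n : ℕ} (a b c d : Fin n → ℝ) :
    vecMulVec a b * vecMulVec c d = (b ⬝ᵥ c) • vecMulVec a d := by
  ext i j
  simp [Matrix.mul_apply, vecMulVec_apply, dotProduct, Finset.sum_mul, Finset.mul_sum]
  congr 1; ext k; ring

/-- decoupled auxiliary dynamics: under
`ẋ(t) = A x(t) + B u(t) + D x(t) M + E u(t) M` with `M = ∑ ℓ, λˡ • vˡ (vˡ)ᵀ` its spectral
decomposition over nonzero eigenvalues, the auxiliary processes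
`x̆(t) = x(t) − ∑ ℓ, x(t) vˡ (vˡ)ᵀ` and `ŭ(t) = u(t) − ∑ ℓ, u(t) vˡ (vˡ)ᵀ` satisfy
`ẋ̆(t) = A x̆(t) + B ŭ(t)`. -/
theorem stmt11 {n dx du L : ℕ}
    (A D : Matrix (Fin dx) (Fin dx) ℝ) (B E : Matrix (Fin dx) (Fin du) ℝ)
    (M : Matrix (Fin n) (Fin n) ℝ) (hSymm : M.IsSymm)
    (lam : Fin L → ℝ) (v : Fin L → (Fin n → ℝ))
    (hlam : ∀ ℓ, lam ℓ ≠ 0)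
    (horth : ∀ ℓ ℓ', dotProduct (v ℓ) (v ℓ') = if ℓ = ℓ' then 1 else 0)
    (hM : M = ∑ ℓ, lam ℓ • Matrix.vecMulVec (v ℓ) (v ℓ))
    (x : ℝ → Matrix (Fin dx) (Fin n) ℝ) (u : ℝ → Matrix (Fin du) (Fin n) ℝ)
    (hdyn : ∀ t : ℝ,
      HasDerivAt x (A * x t + B * u t + D * (x t * M) + E * (u t * M)) t) :
    ∀ t : ℝ,
      HasDerivAt (fun s => x s - ∑ ℓ, x s * Matrix.vecMulVec (v ℓ) (v ℓ))
        (A * (x t - ∑ ℓ, x t * Matrix.vecMulVec (v ℓ) (v ℓ))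
          + B * (u t - ∑ ℓ, u t * Matrix.vecMulVec (v ℓ) (v ℓ))) t := by
  intro t
  set P : Matrix (Fin n) (Fin n) ℝ := ∑ ℓ, Matrix.vecMulVec (v ℓ) (v ℓ) with hP
  set Q : Matrix (Fin n) (Fin n) ℝ := 1 - P with hQ
  -- M * P = M
  have hMP : M * P = M := by
    rw [hM, hP, Finset.sum_mul]
    congr 1; ext ℓ
    rw [Finset.mul_sum]
    rw [Finset.sum_eq_single ℓ]
    · simp [Matrix.smul_mul, vecMulVec_mul', horth]
    · intro ℓ' _ hne
      rw [Matrix.smul_mul, vecMulVec_mul', horth, if_neg (Ne.symm hne)]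
      simp
    · simp
  have hMQ : M * Q = 0 := by
    rw [hQ, Matrix.mul_sub, Matrix.mul_one, hMP, sub_self]
  -- right multiplication by Q as a continuous linear map
  let RX : Matrix (Fin dx) (Fin n) ℝ →ₗ[ℝ] Matrix (Fin dx) (Fin n) ℝ :=
    { toFun := fun X => X * Q
      map_add' := fun X Y => Matrix.add_mul X Y Q
      map_smul' := fun a X => Matrix.smul_mul a X Q }
  have hd : HasDerivAt (fun s => x s * Q)
      ((A * x t + B * u t + D * (x t * M) + E * (u t * M)) * Q) t := by
    have := (RX.toContinuousLinearMap.hasFDerivAt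
      (x := x t)).comp_hasDerivAt t (hdyn t)
    exact this
  have hfun : (fun s => x s - ∑ ℓ, x s * Matrix.vecMulVec (v ℓ) (v ℓ))
      = fun s => x s * Q := by
    funext s
    rw [hQ, Matrix.mul_sub, Matrix.mul_one, hP, Matrix.mul_sum]
  have hval : (A * x t + B * u t + D * (x t * M) + E * (u t * M)) * Q
      = A * (x t - ∑ ℓ, x t * Matrix.vecMulVec (v ℓ) (v ℓ))
          + B * (u t - ∑ ℓ, u t * Matrix.vecMulVec (v ℓ) (v ℓ)) := by
    have hx : x t - ∑ ℓ, x t * Matrix.vecMulVec (v ℓ) (v ℓ) = x t * Q := by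
      rw [hQ, Matrix.mul_sub, Matrix.mul_one, hP, Matrix.mul_sum]
    have hu : u t - ∑ ℓ, u t * Matrix.vecMulVec (v ℓ) (v ℓ) = u t * Q := by
      rw [hQ, Matrix.mul_sub, Matrix.mul_one, hP, Matrix.mul_sum]
    rw [hx, hu, Matrix.add_mul, Matrix.add_mul, Matrix.add_mul,
      Matrix.mul_assoc A, Matrix.mul_assoc B, Matrix.mul_assoc D, Matrix.mul_assoc E,
      Matrix.mul_assoc (x t), Matrix.mul_assoc (u t), hMQ]
    simp
  rw [hfun, ← hval]
  exact hd
end
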